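/- arXiv:2601.10764 — 2 statements merged into one kernel-verified Lean document; each statement's English description precedes it below -/
import Mathlib

section
/- Let $L>0$, let $S=[-L,L]^2$ and $D=\{(x,y)\in\mathbb{R}^2 : |x|+|y|\le L\}$. Suppose $f:\mathbb{R}^2\to\mathbb{C}$ is integrable on $S$ and satisfies $f(x,y)=f(x+L,y+L)=f(x+L,y-L)=f(x-L,y-L)=f(x-L,y+L)$ for all $(x,y)\in\mathbb{R}^2$. Then $\iint_{S\setminus D} f(x,y)\,dx\,dy = \iint_{D} f(x,y)\,dx\,dy$. -/
/-!
The diamond `D` is a fundamental domain of the lattice spanned by `(L, L)` and `(L, -L)`, and so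
is `S \ D`: for signs `s t = ±1`, the corner of `S` cut off by the edge `s x + t y = L` of `D`,
translated by `-(s L, t L)`, becomes the quarter of `D` in the quadrant `s x ≤ 0, t y ≤ 0`.
The four corners are disjoint and the four quarters overlap only on the axes and cover `D` up to
its boundary, so both integrals are the same sum of four integrals.
-/

open MeasureTheory Function Set

theorem Function.Periodic.setIntegral_preimage_add_right {G E : Type*} [MeasurableSpace G]
    [AddGroup G] [MeasurableAdd G] [NormedAddCommGroup E] [NormedSpace ℝ E] {μ : Measure G}
    [μ.IsAddRightInvariant] {f : G → E} {v : G} (hf : Periodic f v) (A : Set G) :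
    ∫ x in (· + v) ⁻¹' A, f x ∂μ = ∫ x in A, f x ∂μ := by
  simpa only [hf _] using (measurePreserving_add_right μ v).setIntegral_preimage_emb
    (measurableEmbedding_addRight v) f A

theorem volume_setOf_fst_eq (c : ℝ) : volume {p : ℝ × ℝ | p.1 = c} = 0 := by
  have : {p : ℝ × ℝ | p.1 = c} = {c} ×ˢ univ := by ext; simp
  simp [this, Measure.volume_eq_prod]

theorem volume_setOf_snd_eq (c : ℝ) : volume {p : ℝ × ℝ | p.2 = c} = 0 := by
  have : {p : ℝ × ℝ | p.2 = c} = univ ×ˢ {c} := by ext; simp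
  simp [this, Measure.volume_eq_prod]

theorem volume_setOf_abs_add_abs_eq (L : ℝ) : volume {p : ℝ × ℝ | |p.1| + |p.2| = L} = 0 := by
  rw [Measure.volume_eq_prod,
    Measure.measure_prod_null (measurableSet_eq_fun (by fun_prop) (by fun_prop))]
  refine Filter.Eventually.of_forall fun x => measure_mono_null (t := {L - |x|, -(L - |x|)}) ?_
    ((toFinite _).measure_zero _)
  intro y (hy : |x| + |y| = L)
  rcases abs_choice y with h | h <;> simp only [mem_insert_iff, mem_singleton_iff] <;> grind

theorem forall_units_int {P : ℤˣ → Prop} : (∀ s, P s) ↔ P 1 ∧ P (-1) := by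
  refine ⟨fun h => ⟨h 1, h (-1)⟩, fun h s => ?_⟩
  obtain rfl | rfl := Int.units_eq_one_or s
  exacts [h.1, h.2]

theorem units_int_mul_self_real (s : ℤˣ) : (s : ℝ) * s = 1 := by
  obtain rfl | rfl := Int.units_eq_one_or s <;> simp

theorem abs_units_int_mul (s : ℤˣ) (x : ℝ) : |(s : ℝ) * x| = |x| := by
  obtain rfl | rfl := Int.units_eq_one_or s <;> simp

theorem exists_units_int_mul_eq_neg_abs (x : ℝ) : ∃ s : ℤˣ, (s : ℝ) * x = -|x| := by
  rcases abs_cases x with ⟨h, -⟩ | ⟨h, -⟩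
  · exact ⟨-1, by simp [h]⟩
  · exact ⟨1, by simp [h]⟩

theorem add_units_int_mul_mem_Icc_iff {x L : ℝ} (s : ℤˣ) :
    x + s * L ∈ Icc (-L) L ↔ s * x ∈ Icc (-(2 * L)) 0 := by
  obtain rfl | rfl := Int.units_eq_one_or s <;>
    simp only [mem_Icc, Units.val_one, Units.val_neg, Int.cast_one, Int.cast_neg, one_mul,
      neg_mul] <;> constructor <;> rintro ⟨h₁, h₂⟩ <;> constructor <;> linarith

theorem abs_add_abs_le_iff_forall_units_int {x y L : ℝ} :
    |x| + |y| ≤ L ↔ ∀ s t : ℤˣ, s * x + t * y ≤ L := by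
  simp only [forall_units_int, Units.val_one, Units.val_neg, Int.cast_one, Int.cast_neg, one_mul,
    neg_mul]
  constructor
  · intro h
    refine ⟨⟨?_, ?_⟩, ?_, ?_⟩ <;>
      linarith [le_abs_self x, neg_abs_le x, le_abs_self y, neg_abs_le y]
  · rintro ⟨⟨h₁, h₂⟩, h₃, h₄⟩
    rcases abs_cases x with ⟨hx, -⟩ | ⟨hx, -⟩ <;> rcases abs_cases y with ⟨hy, -⟩ | ⟨hy, -⟩ <;>
      linarith

namespace SquareDiamond

def square (L : ℝ) : Set (ℝ × ℝ) := Icc (-L) L ×ˢ Icc (-L) L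

def diamond (L : ℝ) : Set (ℝ × ℝ) := {p | |p.1| + |p.2| ≤ L}

/-- The signs `ε = (s, t) ∈ {±1}²` pick the corner of the square beyond the edge `s x + t y = L`
of the diamond. -/
def corner (L : ℝ) (ε : ℤˣ × ℤˣ) : Set (ℝ × ℝ) :=
  square L ∩ {p | L < ε.1 * p.1 + ε.2 * p.2}

def shift (L : ℝ) (ε : ℤˣ × ℤˣ) : ℝ × ℝ := (ε.1 * L, ε.2 * L)

def piece (L : ℝ) (ε : ℤˣ × ℤˣ) : Set (ℝ × ℝ) := (· + shift L ε) ⁻¹' corner L ε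

variable {L : ℝ}

theorem diamond_subset_square : diamond L ⊆ square L := by
  rintro ⟨x, y⟩ (h : |x| + |y| ≤ L)
  exact ⟨abs_le.1 (by linarith [abs_nonneg y]), abs_le.1 (by linarith [abs_nonneg x])⟩

theorem measurableSet_corner (ε : ℤˣ × ℤˣ) : MeasurableSet (corner L ε) :=
  (measurableSet_Icc.prod measurableSet_Icc).inter (measurableSet_lt (by fun_prop) (by fun_prop))

theorem measurableSet_piece (ε : ℤˣ × ℤˣ) : MeasurableSet (piece L ε) :=
  (measurableSet_corner ε).preimage (measurable_add_const _)

theorem iUnion_corner : ⋃ ε, corner L ε = square L \ diamond L := by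
  ext p
  simp [corner, diamond, abs_add_abs_le_iff_forall_units_int, ← inter_iUnion]

theorem pairwise_disjoint_corner : Pairwise (Disjoint on corner L) := by
  rintro ⟨s, t⟩ ⟨s', t'⟩ h
  rw [onFun, disjoint_left]
  rintro ⟨x, y⟩ ⟨⟨hx : x ∈ Icc (-L) L, hy : y ∈ Icc (-L) L⟩, h₁ : L < s * x + t * y⟩
    ⟨-, h₂ : L < s' * x + t' * y⟩
  rw [mem_Icc, ← abs_le] at hx hy
  rw [ne_eq, Prod.mk.injEq, not_and_or] at h
  rcases h with hs | ht
  · rw [Int.units_ne_iff_eq_neg.1 hs, Units.val_neg, Int.cast_neg] at h₁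
    linarith [le_abs_self ((t : ℝ) * y), le_abs_self ((t' : ℝ) * y), abs_units_int_mul t y,
      abs_units_int_mul t' y]
  · rw [Int.units_ne_iff_eq_neg.1 ht, Units.val_neg, Int.cast_neg] at h₁
    linarith [le_abs_self ((s : ℝ) * x), le_abs_self ((s' : ℝ) * x), abs_units_int_mul s x,
      abs_units_int_mul s' x]

theorem mem_piece {x y : ℝ} {s t : ℤˣ} : (x, y) ∈ piece L (s, t) ↔
    s * x ∈ Icc (-(2 * L)) 0 ∧ t * y ∈ Icc (-(2 * L)) 0 ∧ -L < s * x + t * y := by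
  have h : (s : ℝ) * (x + s * L) + t * (y + t * L) = s * x + t * y + 2 * L := by
    linear_combination L * units_int_mul_self_real s + L * units_int_mul_self_real t
  simp only [piece, shift, corner, square, mem_preimage, Prod.mk_add_mk, mem_inter_iff, mem_prod,
    add_units_int_mul_mem_Icc_iff, mem_ofPred_eq, h, and_assoc]
  constructor <;> rintro ⟨hx, hy, h⟩ <;> exact ⟨hx, hy, by linarith⟩

theorem piece_subset_diamond (ε : ℤˣ × ℤˣ) : piece L ε ⊆ diamond L := by
  rintro ⟨x, y⟩ h
  obtain ⟨⟨-, hx⟩, ⟨-, hy⟩, h⟩ := mem_piece.1 h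
  show |x| + |y| ≤ L
  rw [← abs_units_int_mul ε.1 x, ← abs_units_int_mul ε.2 y, abs_of_nonpos hx, abs_of_nonpos hy]
  linarith

theorem diamond_subset_iUnion_piece :
    diamond L ⊆ (⋃ ε, piece L ε) ∪ {p | |p.1| + |p.2| = L} := by
  rintro ⟨x, y⟩ (h : |x| + |y| ≤ L)
  refine h.lt_or_eq.imp (fun h => ?_) id
  obtain ⟨s, hs⟩ := exists_units_int_mul_eq_neg_abs x
  obtain ⟨t, ht⟩ := exists_units_int_mul_eq_neg_abs y
  refine mem_iUnion.2 ⟨(s, t), mem_piece.2 ?_⟩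
  rw [hs, ht]
  refine ⟨⟨?_, ?_⟩, ⟨?_, ?_⟩, ?_⟩ <;> linarith [abs_nonneg x, abs_nonneg y]

theorem iUnion_piece_ae_eq_diamond : (⋃ ε, piece L ε) =ᵐ[volume] diamond L :=
  ae_eq_set.2 ⟨by rw [sdiff_eq_empty.2 (iUnion_subset piece_subset_diamond), measure_empty],
    measure_mono_null (sdiff_subset_iff.2 diamond_subset_iUnion_piece)
      (volume_setOf_abs_add_abs_eq L)⟩

theorem piece_inter_piece_subset {ε ε' : ℤˣ × ℤˣ} (h : ε ≠ ε') :
    piece L ε ∩ piece L ε' ⊆ {p | p.1 = 0} ∪ {p | p.2 = 0} := by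
  obtain ⟨s, t⟩ := ε
  obtain ⟨s', t'⟩ := ε'
  rintro ⟨x, y⟩ ⟨hp, hp'⟩
  obtain ⟨⟨-, hx⟩, ⟨-, hy⟩, -⟩ := mem_piece.1 hp
  obtain ⟨⟨-, hx'⟩, ⟨-, hy'⟩, -⟩ := mem_piece.1 hp'
  rw [ne_eq, Prod.mk.injEq, not_and_or] at h
  rcases h with hs | ht
  · rw [Int.units_ne_iff_eq_neg.1 hs, Units.val_neg, Int.cast_neg] at hx
    left
    show x = 0
    rw [← abs_eq_zero, ← abs_units_int_mul s' x, abs_eq_zero]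
    linarith
  · rw [Int.units_ne_iff_eq_neg.1 ht, Units.val_neg, Int.cast_neg] at hy
    right
    show y = 0
    rw [← abs_eq_zero, ← abs_units_int_mul t' y, abs_eq_zero]
    linarith

theorem pairwise_aedisjoint_piece : Pairwise (AEDisjoint volume on piece L) := fun _ _ h =>
  measure_mono_null (piece_inter_piece_subset h)
    (measure_union_null (volume_setOf_fst_eq 0) (volume_setOf_snd_eq 0))

theorem periodic_shift {β : Type*} {f : ℝ × ℝ → β} (h₁ : Periodic f (L, L))
    (h₂ : Periodic f (L, -L)) (ε : ℤˣ × ℤˣ) : Periodic f (shift L ε) := by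
  obtain ⟨s, t⟩ := ε
  obtain rfl | rfl := Int.units_eq_one_or s <;> obtain rfl | rfl := Int.units_eq_one_or t
  · simpa [shift] using h₁
  · simpa [shift] using h₂
  · simpa [shift] using h₂.neg
  · simpa [shift] using h₁.neg

end SquareDiamond

open SquareDiamond

theorem integral_square_diff_diamond_eq_integral_diamond_general (L : ℝ)
    (f : ℝ × ℝ → ℂ)
    (hf : IntegrableOn f (Set.Icc (-L) L ×ˢ Set.Icc (-L) L) volume)
    (h1 : ∀ x y : ℝ, f (x, y) = f (x + L, y + L))
    (h2 : ∀ x y : ℝ, f (x, y) = f (x + L, y - L)) :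
    ∫ p in (Set.Icc (-L) L ×ˢ Set.Icc (-L) L) \ {p : ℝ × ℝ | |p.1| + |p.2| ≤ L}, f p
      = ∫ p in {p : ℝ × ℝ | |p.1| + |p.2| ≤ L}, f p := by
  have hper : ∀ ε, Periodic f (shift L ε) :=
    periodic_shift (fun p => (h1 p.1 p.2).symm)
      fun (x, y) => by simpa only [Prod.mk_add_mk, sub_eq_add_neg] using (h2 x y).symm
  have hfD : IntegrableOn f (diamond L) := hf.mono_set diamond_subset_square
  change ∫ p in square L \ diamond L, f p = ∫ p in diamond L, f p
  calc ∫ p in square L \ diamond L, f p = ∑ ε, ∫ p in corner L ε, f p := by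
        rw [← iUnion_corner]
        exact integral_iUnion_fintype measurableSet_corner pairwise_disjoint_corner
          fun _ => hf.mono_set inter_subset_left
    _ = ∑ ε, ∫ p in piece L ε, f p := by
        simp only [piece, (hper _).setIntegral_preimage_add_right]
    _ = ∫ p in ⋃ ε, piece L ε, f p := by
        rw [integral_iUnion_ae (fun ε => (measurableSet_piece ε).nullMeasurableSet)
          pairwise_aedisjoint_piece (hfD.mono_set (iUnion_subset piece_subset_diamond)),
          tsum_fintype]
    _ = ∫ p in diamond L, f p := setIntegral_congr_set iUnion_piece_ae_eq_diamond

theorem integral_square_diff_diamond_eq_integral_diamond (L : ℝ) (hL : 0 < L)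
    (f : ℝ × ℝ → ℂ)
    (hf : IntegrableOn f (Set.Icc (-L) L ×ˢ Set.Icc (-L) L) volume)
    (h1 : ∀ x y : ℝ, f (x, y) = f (x + L, y + L))
    (h2 : ∀ x y : ℝ, f (x, y) = f (x + L, y - L))
    (h3 : ∀ x y : ℝ, f (x, y) = f (x - L, y - L))
    (h4 : ∀ x y : ℝ, f (x, y) = f (x - L, y + L)) :
    ∫ p in (Set.Icc (-L) L ×ˢ Set.Icc (-L) L) \ {p : ℝ × ℝ | |p.1| + |p.2| ≤ L}, f p
      = ∫ p in {p : ℝ × ℝ | |p.1| + |p.2| ≤ L}, f p :=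
  integral_square_diff_diamond_eq_integral_diamond_general L f hf h1 h2
end

section
/- Let $A,B,C,D\in\mathbb{R}$. Then $\int_{-\pi}^{\pi}\int_{-\pi}^{\pi} \exp\big(A\cos(u+v)+B\sin(u+v)+C\cos(u-v)+D\sin(u-v)\big)\,du\,dv = \Big(\int_{-\pi}^{\pi} e^{\sqrt{A^2+B^2}\,\cos t}\,dt\Big)\Big(\int_{-\pi}^{\pi} e^{\sqrt{C^2+D^2}\,\cos t}\,dt\Big)$. -/
/-!
Substituting `v ↦ v - u` in the inner integral turns the integrand into `f (2u + w) g (-w)`;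
after Fubini, the integral of `f (2u + w)` over a full period in `u` does not depend on `w`,
so the double integral splits into the product of the two one-dimensional integrals.
Each factor is then reduced to a pure cosine by writing
`A cos x + B sin x = √(A² + B²) cos (x - φ)` and shifting by the phase `φ`.
-/

open MeasureTheory Real

namespace Function.Periodic

variable {E : Type*} [NormedAddCommGroup E] [NormedSpace ℝ E] {f : ℝ → E} {T : ℝ}

theorem intervalIntegral_comp_add_right (hf : Periodic f T) (t c : ℝ) :
    ∫ x in t..t + T, f (x + c) = ∫ x in t..t + T, f x := by
  rw [intervalIntegral.integral_comp_add_right, add_right_comm, hf.intervalIntegral_add_eq]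

theorem intervalIntegral_comp_neg (hf : Periodic f T) (t : ℝ) :
    ∫ x in t..t + T, f (-x) = ∫ x in t..t + T, f x := by
  rw [intervalIntegral.integral_comp_neg, show -t = -(t + T) + T by ring,
    hf.intervalIntegral_add_eq]

theorem intervalIntegral_comp_int_mul_add (hf : Periodic f T)
    (h_int : ∀ t₁ t₂, IntervalIntegrable f volume t₁ t₂) {n : ℤ} (hn : n ≠ 0) (t c : ℝ) :
    ∫ x in t..t + T, f (n * x + c) = ∫ x in t..t + T, f x := by
  have hn' : (n : ℝ) ≠ 0 := Int.cast_ne_zero.mpr hn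
  rw [intervalIntegral.integral_comp_mul_add _ hn',
    show (n : ℝ) * (t + T) + c = (n * t + c) + n • T by rw [zsmul_eq_mul]; ring,
    hf.intervalIntegral_add_zsmul_eq n _ h_int, hf.intervalIntegral_add_eq _ t,
    ← Int.cast_smul_eq_zsmul ℝ, smul_smul, inv_mul_cancel₀ hn', one_smul]

end Function.Periodic

theorem Function.Periodic.intervalIntegral_intervalIntegral_mul_comp_add_comp_sub
    {f g : ℝ → ℝ} {T : ℝ} (hf : Periodic f T) (hg : Periodic g T)
    (hfc : Continuous f) (hgc : Continuous g) (t : ℝ) :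
    ∫ u in t..t + T, ∫ v in t..t + T, f (u + v) * g (u - v)
      = (∫ x in t..t + T, f x) * ∫ x in t..t + T, g x := by
  have h_shift (u : ℝ) : ∫ v in t..t + T, f (u + v) * g (u - v)
      = ∫ w in t..t + T, f (2 * u + w) * g (-w) := by
    have hper : Periodic (fun w => f (2 * u + w) * g (-w)) T :=
      (hf.const_add (2 * u)).mul fun w => by simpa only [neg_add] using hg.neg (-w)
    rw [← hper.intervalIntegral_comp_add_right t (-u)]
    congr 1; ext v; ring_nf
  have h_inner (w : ℝ) : ∫ u in t..t + T, f (2 * u + w) * g (-w)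
      = (∫ x in t..t + T, f x) * g (-w) := by
    rw [intervalIntegral.integral_mul_const,
      ← hf.intervalIntegral_comp_int_mul_add (hfc.intervalIntegrable · ·) two_ne_zero t w]
    norm_num
  have h_cont : Continuous fun p : ℝ × ℝ => f (2 * p.1 + p.2) * g (-p.2) := by fun_prop
  have h_int : IntegrableOn (uncurry fun u w => f (2 * u + w) * g (-w))
      (Set.uIoc t (t + T) ×ˢ Set.uIoc t (t + T)) :=
    (h_cont.continuousOn.integrableOn_compact (isCompact_uIcc.prod isCompact_uIcc)).mono_set
      (Set.prod_mono Set.uIoc_subset_uIcc Set.uIoc_subset_uIcc)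
  simp_rw [h_shift]
  rw [intervalIntegral_intervalIntegral_swap h_int]
  simp_rw [h_inner]
  rw [intervalIntegral.integral_const_mul, hg.intervalIntegral_comp_neg]

theorem exists_mul_cos_add_mul_sin_eq (A B : ℝ) :
    ∃ φ : ℝ, ∀ x, A * cos x + B * sin x = √(A ^ 2 + B ^ 2) * cos (x - φ) := by
  have hnorm : ‖(⟨A, B⟩ : ℂ)‖ = √(A ^ 2 + B ^ 2) := by
    rw [Complex.norm_def, Complex.normSq_mk, sq, sq]
  refine ⟨Complex.arg ⟨A, B⟩, fun x => ?_⟩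
  have hcos := Complex.norm_mul_cos_arg ⟨A, B⟩
  have hsin := Complex.norm_mul_sin_arg ⟨A, B⟩
  rw [hnorm] at hcos hsin
  rw [cos_sub]
  linear_combination (-cos x) * hcos - sin x * hsin

theorem intervalIntegral_comp_mul_cos_add_mul_sin {E : Type*} [NormedAddCommGroup E]
    [NormedSpace ℝ E] (F : ℝ → E) (A B t : ℝ) :
    ∫ x in t..t + 2 * π, F (A * cos x + B * sin x)
      = ∫ x in t..t + 2 * π, F (√(A ^ 2 + B ^ 2) * cos x) := by
  obtain ⟨φ, hφ⟩ := exists_mul_cos_add_mul_sin_eq A B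
  simp_rw [hφ, sub_eq_add_neg]
  exact (cos_periodic.comp (F <| √(A ^ 2 + B ^ 2) * ·)).intervalIntegral_comp_add_right t _

theorem periodic_mul_cos_add_mul_sin (A B : ℝ) :
    Function.Periodic (fun x => A * cos x + B * sin x) (2 * π) := fun x => by
  simp only [cos_add_two_pi, sin_add_two_pi]

theorem double_integral_exp_trig_eq_product (A B C D : ℝ) :
    (∫ u in Set.Icc (-π) π, ∫ v in Set.Icc (-π) π,
        Real.exp (A * Real.cos (u + v) + B * Real.sin (u + v)
          + C * Real.cos (u - v) + D * Real.sin (u - v)))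
      = (∫ t in Set.Icc (-π) π, Real.exp (Real.sqrt (A ^ 2 + B ^ 2) * Real.cos t))
        * ∫ t in Set.Icc (-π) π, Real.exp (Real.sqrt (C ^ 2 + D ^ 2) * Real.cos t) := by
  have h_Icc (h : ℝ → ℝ) : ∫ t in Set.Icc (-π) π, h t = ∫ t in (-π)..(-π + 2 * π), h t := by
    rw [integral_Icc_eq_integral_Ioc, intervalIntegral.integral_of_le (by linarith [pi_pos]),
      show -π + 2 * π = π by ring]
  have h_split (u v : ℝ) : exp (A * cos (u + v) + B * sin (u + v)
      + C * cos (u - v) + D * sin (u - v))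
      = exp (A * cos (u + v) + B * sin (u + v)) * exp (C * cos (u - v) + D * sin (u - v)) := by
    rw [add_assoc, exp_add]
  simp_rw [h_Icc, h_split]
  have h_per (a b : ℝ) := (periodic_mul_cos_add_mul_sin a b).comp exp
  refine ((h_per A B).intervalIntegral_intervalIntegral_mul_comp_add_comp_sub (h_per C D)
    (by fun_prop) (by fun_prop) _).trans ?_
  exact congrArg₂ (· * ·) (intervalIntegral_comp_mul_cos_add_mul_sin exp A B _)
    (intervalIntegral_comp_mul_cos_add_mul_sin exp C D _)
end
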